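/- Fix integers n ≥ 1 and 0 ≤ k ≤ n, and let e_1,…,e_{2n} be the standard symplectic basis of (ℝ^{2n}, ω_0). A matrix A ∈ Sp(2n,ℝ) satisfies Az = z for all z ∈ ℝ^{n,k} if and only if A e_i = e_i for i = 1,…,n+k and A e_{n+l} = e_{n+l} + Σ_{j=k+1}^{n} b_{jl} e_j for k < l ≤ n, where the real coefficients satisfy b_{jl} = b_{lj} for all k < j, l ≤ n. Consequently, tA_0 + (1−t)A_1 ∈ Sp(2n,k) for all t ∈ [0,1] and A_0, A_1 ∈ Sp(2n,k); in particular Sp(2n,k) is a connected subgroup of Sp(2n,ℝ). -/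

import Mathlib

noncomputable section

open MeasureTheory Set Bornology RealInnerProductSpace Pointwise
open scoped ENNReal NNReal Topology

set_option maxHeartbeats 1000000
set_option synthInstance.maxHeartbeats 400000

namespace CEH

/-- `ℝ^{2n}`, with coordinates `(q_1,…,q_n,p_1,…,p_n)`. -/
abbrev R2 (n : ℕ) := EuclideanSpace ℝ (Fin (2 * n))

/-- The standard complex structure `J_{2n} : (q,p) ↦ (p,-q)`. -/
def Jfun (n : ℕ) (x : R2 n) : R2 n :=
  WithLp.toLp 2 fun i => if h : (i : ℕ) < n then x ⟨(i : ℕ) + n, by omega⟩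
           else -x ⟨(i : ℕ) - n, by have := i.isLt; omega⟩

def qIdx (n : ℕ) (i : Fin n) : Fin (2 * n) := ⟨i, by have := i.isLt; omega⟩
def pIdx (n : ℕ) (i : Fin n) : Fin (2 * n) := ⟨n + i, by have := i.isLt; omega⟩

/-- The standard symplectic form `ω₀ = Σ dq_i ∧ dp_i`. -/
def omega0 (n : ℕ) (x y : R2 n) : ℝ :=
  ∑ i : Fin n, (x (qIdx n i) * y (pIdx n i) - x (pIdx n i) * y (qIdx n i))

/-- The coisotropic subspace `ℝ^{n,k}` (the last `n-k` momentum coordinates vanish). -/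
def Rnk (n k : ℕ) : Submodule ℝ (R2 n) where
  carrier := {x | ∀ i : Fin (2 * n), n + k ≤ (i : ℕ) → x i = 0}
  add_mem' := by intro a b ha hb i hi; simp [ha i hi, hb i hi]
  zero_mem' := by intro i hi; simp
  smul_mem' := by intro c a ha i hi; simp [ha i hi]

/-- `V_0^{n,k}`: only the coordinates `q_{k+1},…,q_n` may be nonzero. -/
def V0 (n k : ℕ) : Submodule ℝ (R2 n) where
  carrier := {x | ∀ i : Fin (2 * n), ((i : ℕ) < k ∨ n ≤ (i : ℕ)) → x i = 0}
  add_mem' := by intro a b ha hb i hi; simp [ha i hi, hb i hi]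
  zero_mem' := by intro i hi; simp
  smul_mem' := by intro c a ha i hi; simp [ha i hi]

/-- `V_1^{n,k}`: only the coordinates `q_1,…,q_k,p_1,…,p_k` may be nonzero. -/
def V1 (n k : ℕ) : Submodule ℝ (R2 n) where
  carrier := {x | ∀ i : Fin (2 * n),
      ((k ≤ (i : ℕ) ∧ (i : ℕ) < n) ∨ n + k ≤ (i : ℕ)) → x i = 0}
  add_mem' := by intro a b ha hb i hi; simp [ha i hi, hb i hi]
  zero_mem' := by intro i hi; simp
  smul_mem' := by intro c a ha i hi; simp [ha i hi]

/-- The rotation `e^{θ J} = cos θ + sin θ·J` (since `J² = -1`). -/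
def rot (n : ℕ) (θ : ℝ) (v : R2 n) : R2 n := Real.cos θ • v + Real.sin θ • Jfun n v

open Real in
/-- weight of the `a_m`-coefficient in the `H^{1/2}`-inner product. -/
def wA (m : ℤ) : ℝ := if m = 0 then 1 else π * |(m : ℝ)|

open Real in
/-- weight of the `b_m`-coefficient  in the `H^{1/2}`-inner product
(`|2m| = 2|m|`). -/
def wB (m : ℤ) : ℝ := if m = 0 then 1 else 2 * π * |(m : ℝ)|

/-- The Hilbert space `E = H^{1/2}_{n,k}`, realized through the rescaled coefficients
`c_m = √(w_A m) • a_m`, `d_m = √(w_B m) • b_m`, so that its norm is the ℓ²-norm of the rescaled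
coefficients; this is exactly the inner product
`⟨x,x'⟩ = ⟨a_0,a_0'⟩+⟨b_0,b_0'⟩+π Σ_{m≠0} (|m|⟨a_m,a_m'⟩+|2m|⟨b_m,b_m'⟩)`. -/
abbrev Ehalf (n k : ℕ) :=
  WithLp 2 ((lp (fun _ : ℤ => ↥(V0 n k)) 2) × (lp (fun _ : ℤ => ↥(V1 n k)) 2))

/-- The (unscaled) Fourier coefficient `a_m ∈ V_0^{n,k}` of `x ∈ E`. -/
def aCoeff (n k : ℕ) (x : Ehalf n k) (m : ℤ) : R2 n :=
  (Real.sqrt (wA m))⁻¹ • (((WithLp.equiv 2 _ x).1 m : R2 n))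

/-- The (unscaled) Fourier coefficient `b_m ∈ V_1^{n,k}` of `x ∈ E`. -/
def bCoeff (n k : ℕ) (x : Ehalf n k) (m : ℤ) : R2 n :=
  (Real.sqrt (wB m))⁻¹ • (((WithLp.equiv 2 _ x).2 m : R2 n))

lemma memℓp_restrict {ι : Type*} {G : ι → Type*} [∀ i, NormedAddCommGroup (G i)]
    (P : ι → Prop) [DecidablePred P] (f : ∀ i, G i) (hf : Memℓp f 2) :
    Memℓp (fun i => if P i then f i else 0) 2 := by
  have hs := hf.summable (p := 2) (by norm_num)
  refine memℓp_gen ?_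
  refine Summable.of_nonneg_of_le (fun i => by positivity) (fun i => ?_) hs
  by_cases h : P i <;> simp [h]

/-- Restriction of the coefficients of an element of `E` to indices satisfying `P`. -/
def restrictE (n k : ℕ) (P : ℤ → Prop) [DecidablePred P] (x : Ehalf n k) : Ehalf n k :=
  (WithLp.equiv 2 _).symm
    (⟨fun m => if P m then (WithLp.equiv 2 _ x).1 m else 0,
        memℓp_restrict P _ ((WithLp.equiv 2 _ x).1.2)⟩,
     ⟨fun m => if P m then (WithLp.equiv 2 _ x).2 m else 0,
        memℓp_restrict P _ ((WithLp.equiv 2 _ x).2.2)⟩)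

/-- `x⁺`: the part of `x` with Fourier indices `m > 0`, i.e. the `E⁺`-component. -/
def posPart (n k : ℕ) (x : Ehalf n k) : Ehalf n k := restrictE n k (fun m => 0 < m) x
/-- `x⁰`, the `E⁰ = ℝ^{n,k}`-component. -/
def zeroPart (n k : ℕ) (x : Ehalf n k) : Ehalf n k := restrictE n k (fun m => m = 0) x
/-- `x⁻`, the `E⁻`-component. -/
def negPart (n k : ℕ) (x : Ehalf n k) : Ehalf n k := restrictE n k (fun m => m < 0) x

/-- `S⁺`, the unit sphere of `E⁺`. -/
def Splus (n k : ℕ) : Set (Ehalf n k) := {x | posPart n k x = x ∧ ‖x‖ = 1}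

/-- Lebesgue measure on `(0,1]`, used for `L²([0,1],ℝ^{2n})`. -/
def unitMeasure : Measure ℝ := volume.restrict (Set.Ioc (0 : ℝ) 1)

instance : IsFiniteMeasure unitMeasure := by constructor; simp [unitMeasure]

open Real in
/-- The `m`-th summand `e^{mπtJ}a_m + e^{2mπtJ}b_m` of the function represented by `x ∈ E`. -/
def evalSummand (n k : ℕ) (x : Ehalf n k) (m : ℤ) : ℝ → R2 n :=
  fun t => rot n ((m : ℝ) * π * t) (aCoeff n k x m) + rot n (2 * (m : ℝ) * π * t) (bCoeff n k x m)

lemma continuous_rot (n : ℕ) (v : R2 n) : Continuous fun θ : ℝ => rot n θ v := by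
  unfold rot; fun_prop

lemma norm_rot_le (n : ℕ) (θ : ℝ) (v : R2 n) : ‖rot n θ v‖ ≤ ‖v‖ + ‖Jfun n v‖ := by
  refine le_trans (norm_add_le _ _) (add_le_add ?_ ?_) <;>
  · rw [norm_smul]
    have h1 := Real.abs_cos_le_one θ
    have h2 := Real.abs_sin_le_one θ
    have h3 := norm_nonneg v
    have h4 := norm_nonneg (Jfun n v)
    rw [Real.norm_eq_abs]
    nlinarith

lemma memℒp_evalSummand (n k : ℕ) (x : Ehalf n k) (m : ℤ) :
    MemLp (evalSummand n k x m) 2 unitMeasure := by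
  refine MemLp.of_bound ?_
    ((‖aCoeff n k x m‖ + ‖Jfun n (aCoeff n k x m)‖) +
      (‖bCoeff n k x m‖ + ‖Jfun n (bCoeff n k x m)‖)) ?_
  · apply Continuous.aestronglyMeasurable
    exact ((continuous_rot n _).comp (by fun_prop)).add ((continuous_rot n _).comp (by fun_prop))
  · filter_upwards with t
    exact le_trans (norm_add_le _ _) (add_le_add (norm_rot_le n _ _) (norm_rot_le n _ _))

/-- The `L²`-function `[0,1] → ℝ^{2n}` represented by `x ∈ E = H^{1/2}_{n,k}`. -/
def toL2 (n k : ℕ) (x : Ehalf n k) : Lp (R2 n) 2 unitMeasure :=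
  ∑' m : ℤ, (memℒp_evalSummand n k x m).toLp (evalSummand n k x m)

/-- The functional `Φ_H(x) = ½(‖x⁺‖² − ‖x⁻‖²) − ∫₀¹ H(x(t)) dt` on `E`. -/
def PhiFun (n k : ℕ) (H : R2 n → ℝ) (x : Ehalf n k) : ℝ :=
  (‖posPart n k x‖ ^ 2 - ‖negPart n k x‖ ^ 2) / 2 - ∫ t, H ((toL2 n k x) t) ∂unitMeasure

/-- The set `Γ_{n,k}` of admissible deformations of `E`. -/
def AdmissibleDeformations (n k : ℕ) : Set (Ehalf n k → Ehalf n k) :=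
  {γ | ∃ (Γ : ℝ → Ehalf n k → Ehalf n k) (a b c : ℝ → Ehalf n k → ℝ)
        (K : ℝ → Ehalf n k → Ehalf n k),
      Γ 0 = id ∧ Γ 1 = γ ∧
      ContinuousOn (fun p : Ehalf n k × ℝ => Γ p.2 p.1) (univ ×ˢ Icc (0:ℝ) 1) ∧
      (∀ u ∈ Icc (0:ℝ) 1, ∀ x : Ehalf n k, posPart n k x ≠ 0 → posPart n k (Γ u x) ≠ 0) ∧
      (∀ u ∈ Icc (0:ℝ) 1, ∀ x : Ehalf n k,
        Γ u x = a u x • posPart n k x + b u x • zeroPart n k x + c u x • negPart n k x + K u x ∧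
        0 < a u x ∧ 0 < b u x ∧ 0 < c u x) ∧
      ContinuousOn (fun p : Ehalf n k × ℝ => ((a p.2 p.1, b p.2 p.1, c p.2 p.1), K p.2 p.1))
        (univ ×ˢ Icc (0:ℝ) 1) ∧
      (∀ S : Set (Ehalf n k × ℝ), S ⊆ univ ×ˢ Icc (0:ℝ) 1 → IsClosed S → IsBounded S →
        IsCompact ((fun p : Ehalf n k × ℝ =>
          ((a p.2 p.1, b p.2 p.1, c p.2 p.1), K p.2 p.1)) '' S))}

/-- The coisotropic capacity `c^{n,k}(H) = sup_{γ∈Γ} inf_{x∈γ(S⁺)} Φ_H(x)` of a Hamiltonian. -/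
def cHam (n k : ℕ) (H : R2 n → ℝ) : EReal :=
  ⨆ γ ∈ AdmissibleDeformations n k, ⨅ x ∈ γ '' Splus n k, (PhiFun n k H x : EReal)

open Real in
/-- Condition (H2). -/
def H2cond (n k : ℕ) (H : R2 n → ℝ) : Prop :=
  ∃ (z0 : R2 n) (a b : ℝ) (C : Set (R2 n)), z0 ∈ Rnk n k ∧ IsCompact C ∧
    (∀ z ∉ C, H z = a * ‖z‖ ^ 2 + ⟪z, z0⟫ + b) ∧
    (if k < n then π / 2 < a else π < a)

/-- Condition (H1). -/
def H1cond (n k : ℕ) (H : R2 n → ℝ) : Prop :=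
  (interior (H ⁻¹' {0})).Nonempty ∧
    (interior (H ⁻¹' {0}) ∩ (Rnk n k : Set (R2 n))).Nonempty

/-- The test Hamiltonians for a bounded set `B`: nonnegative continuous functions vanishing near
the closure of `B` and satisfying (H2). -/
def admissibleHams (n k : ℕ) (B : Set (R2 n)) : Set (R2 n → ℝ) :=
  {H | Continuous H ∧ (∀ z, 0 ≤ H z) ∧ H2cond n k H ∧
    ∃ U : Set (R2 n), IsOpen U ∧ closure B ⊆ U ∧ ∀ z ∈ U, H z = 0}

/-- The coisotropic Ekeland–Hofer capacity of a bounded set. -/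
def capBounded (n k : ℕ) (B : Set (R2 n)) : EReal :=
  ⨅ H ∈ admissibleHams n k B, cHam n k H

open Classical in
/-- The coisotropic Ekeland–Hofer capacity `c^{n,k}(B)` of an arbitrary set. -/
def cap (n k : ℕ) (B : Set (R2 n)) : EReal :=
  if IsBounded B then capBounded n k B
  else ⨆ A ∈ {A : Set (R2 n) | A ⊆ B ∧ IsBounded A ∧
      (closure A ∩ (Rnk n k : Set (R2 n))).Nonempty}, capBounded n k A

/-- A linear map is symplectic. -/
def SymplecticLin (n : ℕ) (L : R2 n →L[ℝ] R2 n) : Prop :=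
  ∀ u v, omega0 n (L u) (L v) = omega0 n u v

/-- Membership in `Sp(2n,k) = {A ∈ Sp(2n,ℝ) : Az = z ∀ z ∈ ℝ^{n,k}}`. -/
def MemSp2nk (n k : ℕ) (L : R2 n →L[ℝ] R2 n) : Prop :=
  SymplecticLin n L ∧ ∀ z ∈ Rnk n k, L z = z

/-- A symplectomorphism of `(ℝ^{2n}, ω₀)`. -/
def IsSymplectomorphism (n : ℕ) (φ : R2 n → R2 n) : Prop :=
  Function.Bijective φ ∧ ContDiff ℝ (⊤ : ℕ∞) φ ∧ ∀ z, SymplecticLin n (fderiv ℝ φ z)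

/-- The normal cone to a convex body `D` at `x`. -/
def normalCone (n : ℕ) (D : Set (R2 n)) (x : R2 n) : Set (R2 n) :=
  {y | ∀ u ∈ D, ⟪u - x, y⟫ ≤ 0}

/-- The action `A(z) = ½∫₀ᵀ ⟨−J ż, z⟩`. -/
def chordAction (n : ℕ) (T : ℝ) (z z' : ℝ → R2 n) : ℝ :=
  (1 / 2) * ∫ t in (0:ℝ)..T, ⟪-(Jfun n (z' t)), z t⟫

/-- A generalized leafwise chord (GLC) on the boundary of `D` for `ℝ^{n,k}`:
a nonconstant absolutely continuous curve on `∂D` with `ż(t) ∈ J N_{∂D}(z(t))` a.e.,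
whose endpoints lie in `ℝ^{n,k}` on the same leaf. -/
def IsGLC (n k : ℕ) (D : Set (R2 n)) (T : ℝ) (z z' : ℝ → R2 n) : Prop :=
  0 < T ∧ (∀ t ∈ Icc (0:ℝ) T, z t ∈ frontier D) ∧ (¬ ∀ t ∈ Icc (0:ℝ) T, z t = z 0) ∧
  IntervalIntegrable z' volume 0 T ∧
  (∀ t ∈ Icc (0:ℝ) T, z t = z 0 + ∫ s in (0:ℝ)..t, z' s) ∧
  (∀ᵐ t ∂(volume.restrict (Ioc (0:ℝ) T)), z' t ∈ (Jfun n) '' normalCone n D (z t)) ∧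
  z 0 ∈ Rnk n k ∧ z T ∈ Rnk n k ∧ z 0 - z T ∈ V0 n k

/-- A (`C¹`) leafwise chord on the boundary of a convex body `D` for `ℝ^{n,k}`. -/
def IsLeafChordConvex (n k : ℕ) (D : Set (R2 n)) (T : ℝ) (z z' : ℝ → R2 n) : Prop :=
  0 < T ∧ (∀ t ∈ Icc (0:ℝ) T, z t ∈ frontier D) ∧ (¬ ∀ t ∈ Icc (0:ℝ) T, z t = z 0) ∧
  ContinuousOn z' (Icc (0:ℝ) T) ∧
  (∀ t ∈ Icc (0:ℝ) T, HasDerivWithinAt z (z' t) (Icc (0:ℝ) T) t) ∧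
  (∀ t ∈ Icc (0:ℝ) T, z' t ∈ (Jfun n) '' normalCone n D (z t)) ∧
  z 0 ∈ Rnk n k ∧ z T ∈ Rnk n k ∧ z 0 - z T ∈ V0 n k

/-- A convex body has `C^{1,1}` boundary: at every boundary point the normal cone is spanned by a
unique outward unit normal, and the unit normal field is Lipschitz. -/
def HasC11Boundary (n : ℕ) (D : Set (R2 n)) : Prop :=
  ∃ (ν : R2 n → R2 n) (L : ℝ≥0), LipschitzOnWith L ν (frontier D) ∧
    ∀ x ∈ frontier D, ‖ν x‖ = 1 ∧
      normalCone n D x = {y | ∃ c : ℝ, 0 ≤ c ∧ y = c • ν x}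

/-- A leafwise chord for `ℝ^{n,k}` on the hypersurface `S = F⁻¹(0)`: a nonconstant `C¹` curve on
`S` whose velocity lies in the characteristic line `ker(ω₀|_{T S})`, with endpoints in `ℝ^{n,k}`
on the same leaf. -/
def IsLeafChordLevel (n k : ℕ) (F : R2 n → ℝ) (T : ℝ) (x x' : ℝ → R2 n) : Prop :=
  0 < T ∧ ContinuousOn x' (Icc (0:ℝ) T) ∧
  (∀ t ∈ Icc (0:ℝ) T, HasDerivWithinAt x (x' t) (Icc (0:ℝ) T) t) ∧
  (¬ ∀ t ∈ Icc (0:ℝ) T, x t = x 0) ∧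
  (∀ t ∈ Icc (0:ℝ) T, F (x t) = 0) ∧
  (∀ t ∈ Icc (0:ℝ) T, fderiv ℝ F (x t) (x' t) = 0) ∧
  (∀ t ∈ Icc (0:ℝ) T, ∀ u, fderiv ℝ F (x t) u = 0 → omega0 n (x' t) u = 0) ∧
  x 0 ∈ Rnk n k ∧ x T ∈ Rnk n k ∧ x 0 - x T ∈ V0 n k


/-- The standard basis vector `e_i` of `ℝ^{2n}`. -/
def eV (n : ℕ) (i : Fin (2 * n)) : R2 n := EuclideanSpace.single i 1


section Aux
variable {n k : ℕ}

lemma eV_apply (i j : Fin (2*n)) : eV n i j = if j = i then 1 else 0 := by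
  simp [eV, EuclideanSpace.single_apply]

lemma eV_ne (a b : Fin (2*n)) (h : (b:ℕ) ≠ (a:ℕ)) : eV n a b = 0 := by
  rw [eV_apply, if_neg]; exact fun hh => h (by rw [hh])

lemma eV_eq (a : Fin (2*n)) : eV n a a = 1 := by rw [eV_apply, if_pos rfl]

lemma R2.sum_apply {ι : Type*} (s : Finset ι) (f : ι → R2 n) (i : Fin (2*n)) :
    (∑ j ∈ s, f j) i = ∑ j ∈ s, f j i :=
  map_sum (AddMonoidHom.mk' (fun x : R2 n => x i) (fun _ _ => rfl)) f s

lemma smul_apply' (c : ℝ) (x : R2 n) (i : Fin (2*n)) : (c • x) i = c * x i := rfl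
lemma add_apply' (x y : R2 n) (i : Fin (2*n)) : (x + y) i = x i + y i := rfl
lemma sub_apply' (x y : R2 n) (i : Fin (2*n)) : (x - y) i = x i - y i := rfl

lemma eV_decomp (x : R2 n) : ∑ i : Fin (2*n), x i • eV n i = x := by
  ext i
  rw [R2.sum_apply]
  simp [smul_apply', eV_apply]

lemma omega0_expand (u a v b : R2 n) :
    omega0 n (u + a) (v + b) =
      omega0 n u v + omega0 n u b + omega0 n a v + omega0 n a b := by
  unfold omega0
  rw [← Finset.sum_add_distrib, ← Finset.sum_add_distrib, ← Finset.sum_add_distrib]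
  refine Finset.sum_congr rfl fun i _ => ?_
  simp only [add_apply']; ring

lemma omega0_smul_left (c : ℝ) (x y : R2 n) : omega0 n (c • x) y = c * omega0 n x y := by
  unfold omega0
  rw [Finset.mul_sum]
  refine Finset.sum_congr rfl fun i _ => ?_
  simp only [smul_apply']; ring

lemma omega0_smul_right (c : ℝ) (x y : R2 n) : omega0 n x (c • y) = c * omega0 n x y := by
  unfold omega0
  rw [Finset.mul_sum]
  refine Finset.sum_congr rfl fun i _ => ?_
  simp only [smul_apply']; ring

lemma omega0_add_left (x y z : R2 n) : omega0 n (x + y) z = omega0 n x z + omega0 n y z := by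
  unfold omega0
  rw [← Finset.sum_add_distrib]
  refine Finset.sum_congr rfl fun i _ => ?_
  simp only [add_apply']; ring

lemma omega0_add_right (x y z : R2 n) : omega0 n x (y + z) = omega0 n x y + omega0 n x z := by
  unfold omega0
  rw [← Finset.sum_add_distrib]
  refine Finset.sum_congr rfl fun i _ => ?_
  simp only [add_apply']; ring

lemma omega0_sub_right (x y z : R2 n) : omega0 n x (y - z) = omega0 n x y - omega0 n x z := by
  unfold omega0
  rw [← Finset.sum_sub_distrib]
  refine Finset.sum_congr rfl fun i _ => ?_
  simp only [sub_apply']; ring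

lemma omega0_eV_q (i : Fin n) (w : R2 n) : omega0 n (eV n (qIdx n i)) w = w (pIdx n i) := by
  unfold omega0
  rw [Finset.sum_eq_single i]
  · rw [eV_eq, eV_ne _ _ (by simp [qIdx, pIdx]; have := i.isLt; omega)]; ring
  · intro j _ hj
    rw [eV_ne _ _ (by simp [qIdx]; exact fun h => hj (Fin.ext h)),
        eV_ne _ _ (by simp [qIdx, pIdx]; have := i.isLt; omega)]
    ring
  · intro h; exact absurd (Finset.mem_univ i) h

lemma omega0_eV_p (i : Fin n) (w : R2 n) : omega0 n (eV n (pIdx n i)) w = - w (qIdx n i) := by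
  unfold omega0
  rw [Finset.sum_eq_single i]
  · rw [eV_eq, eV_ne _ _ (by simp [qIdx, pIdx]; have := i.isLt; omega)]; ring
  · intro j _ hj
    rw [eV_ne _ _ (by simp [qIdx, pIdx]; have := j.isLt; omega),
        eV_ne _ _ (by simp [pIdx]; exact fun h => hj (Fin.ext h))]
    ring
  · intro h; exact absurd (Finset.mem_univ i) h

lemma omega0_eV_p' (i : Fin n) (w : R2 n) : omega0 n w (eV n (pIdx n i)) = w (qIdx n i) := by
  unfold omega0
  rw [Finset.sum_eq_single i]
  · rw [eV_eq, eV_ne _ _ (by simp [qIdx, pIdx]; have := i.isLt; omega)]; ring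
  · intro j _ hj
    rw [eV_ne _ _ (by simp [pIdx]; exact fun h => hj (Fin.ext h)),
        eV_ne _ _ (by simp [qIdx, pIdx]; have := j.isLt; omega)]
    ring
  · intro h; exact absurd (Finset.mem_univ i) h

lemma mem_Rnk_iff (x : R2 n) : x ∈ Rnk n k ↔ ∀ i : Fin (2*n), n + k ≤ (i:ℕ) → x i = 0 :=
  Iff.rfl

lemma mem_V0_iff (x : R2 n) : x ∈ V0 n k ↔ ∀ i : Fin (2*n), ((i:ℕ) < k ∨ n ≤ (i:ℕ)) → x i = 0 :=
  Iff.rfl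

lemma eV_mem_Rnk {i : Fin (2*n)} (h : (i:ℕ) < n + k) : eV n i ∈ Rnk n k := by
  rw [mem_Rnk_iff]
  intro j hj
  exact eV_ne _ _ (by omega)

lemma V0_isotropic {v w : R2 n} (hv : v ∈ V0 n k) (hw : w ∈ V0 n k) : omega0 n v w = 0 := by
  rw [mem_V0_iff] at hv hw
  unfold omega0
  refine Finset.sum_eq_zero fun i _ => ?_
  rw [hv (pIdx n i) (Or.inr (by simp [pIdx])), hw (pIdx n i) (Or.inr (by simp [pIdx]))]
  ring

lemma perp_Rnk_mem_V0 (hk : k ≤ n) {w : R2 n}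
    (h : ∀ z ∈ Rnk n k, omega0 n z w = 0) : w ∈ V0 n k := by
  rw [mem_V0_iff]
  intro i hi
  rcases hi with hi | hi
  · set j : Fin n := ⟨(i:ℕ), by omega⟩ with hj
    have hz : eV n (pIdx n j) ∈ Rnk n k := eV_mem_Rnk (by simp [pIdx, hj]; omega)
    have := h _ hz
    rw [omega0_eV_p] at this
    have hq : qIdx n j = i := Fin.ext (by simp [qIdx, hj])
    rw [hq] at this
    linarith
  · set j : Fin n := ⟨(i:ℕ) - n, by have := i.isLt; omega⟩ with hj
    have hz : eV n (qIdx n j) ∈ Rnk n k := eV_mem_Rnk (by simp [qIdx, hj]; omega)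
    have := h _ hz
    rw [omega0_eV_q] at this
    have hq : pIdx n j = i := Fin.ext (by simp [pIdx, hj]; omega)
    rw [hq] at this
    exact this

lemma N_mem_V0 (hk : k ≤ n) {L : R2 n →L[ℝ] R2 n} (hL : SymplecticLin n L)
    (hfix : ∀ z ∈ Rnk n k, L z = z) (u : R2 n) : L u - u ∈ V0 n k := by
  refine perp_Rnk_mem_V0 hk fun z hz => ?_
  rw [omega0_sub_right]
  have h1 : omega0 n z (L u) = omega0 n z u := by
    conv_lhs => rw [← hfix z hz]
    exact hL z u
  rw [h1]; ring

lemma cross_identity (hk : k ≤ n) {L : R2 n →L[ℝ] R2 n} (hL : SymplecticLin n L)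
    (hfix : ∀ z ∈ Rnk n k, L z = z) (u v : R2 n) :
    omega0 n (L u - u) v + omega0 n u (L v - v) = 0 := by
  have key := hL u v
  have hu : L u = u + (L u - u) := by abel
  have hv : L v = v + (L v - v) := by abel
  rw [hu, hv, omega0_expand,
      V0_isotropic (N_mem_V0 hk hL hfix u) (N_mem_V0 hk hL hfix v)] at key
  linarith

end Aux

/-- Characterization of the elements of `Sp(2n,k)` among symplectic linear
maps; consequently `Sp(2n,k)` is convex, in particular connected. -/
theorem sp2nk_characterization_and_connected (n k : ℕ) (hn : 1 ≤ n) (hk : k ≤ n) :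
    (∀ L : R2 n →L[ℝ] R2 n, SymplecticLin n L →
      ((∀ z ∈ Rnk n k, L z = z) ↔
        ∃ b : Fin (2 * n) → Fin (2 * n) → ℝ,
          (∀ j l, b j l = b l j) ∧
          (∀ i : Fin (2 * n), (i : ℕ) < n + k → L (eV n i) = eV n i) ∧
          (∀ l : Fin (2 * n), n + k ≤ (l : ℕ) →
            L (eV n l) = eV n l + ∑ j : Fin (2 * n),
              (if k ≤ (j : ℕ) ∧ (j : ℕ) < n
                then b j ⟨(l : ℕ) - n, by have := l.isLt; omega⟩ • eV n j else 0)))) ∧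
    (∀ A0 A1 : R2 n →L[ℝ] R2 n, MemSp2nk n k A0 → MemSp2nk n k A1 →
      ∀ t ∈ Icc (0:ℝ) 1, MemSp2nk n k (t • A0 + (1 - t) • A1)) ∧
    IsConnected {L : R2 n →L[ℝ] R2 n | MemSp2nk n k L} := by
  have hNmem : ∀ L : R2 n →L[ℝ] R2 n, SymplecticLin n L → (∀ z ∈ Rnk n k, L z = z) →
      ∀ u, L u - u ∈ V0 n k := fun L hL hfix => N_mem_V0 hk hL hfix
  have P2 : ∀ A0 A1 : R2 n →L[ℝ] R2 n, MemSp2nk n k A0 → MemSp2nk n k A1 →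
      ∀ t ∈ Icc (0:ℝ) 1, MemSp2nk n k (t • A0 + (1 - t) • A1) := by
    intro A0 A1 h0 h1 t ht
    have hfix : ∀ z ∈ Rnk n k, (t • A0 + (1 - t) • A1) z = z := by
      intro z hz
      simp only [ContinuousLinearMap.add_apply, ContinuousLinearMap.smul_apply,
        h0.2 z hz, h1.2 z hz]
      rw [← add_smul]
      simp
    refine ⟨?_, hfix⟩
    intro u v
    have decomp : ∀ w : R2 n, (t • A0 + (1 - t) • A1) w
        = w + (t • (A0 w - w) + (1 - t) • (A1 w - w)) := by
      intro w
      have h : t • w + (1 - t) • w = w := by rw [← add_smul]; simp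
      calc (t • A0 + (1 - t) • A1) w = t • A0 w + (1 - t) • A1 w := by
            simp only [ContinuousLinearMap.add_apply, ContinuousLinearMap.smul_apply]
        _ = (t • w + (1 - t) • w) + (t • (A0 w - w) + (1 - t) • (A1 w - w)) := by
            rw [smul_sub, smul_sub]; abel
        _ = w + (t • (A0 w - w) + (1 - t) • (A1 w - w)) := by rw [h]
    have memV : ∀ w : R2 n, t • (A0 w - w) + (1 - t) • (A1 w - w) ∈ V0 n k := fun w =>
      Submodule.add_mem _ (Submodule.smul_mem _ _ (hNmem A0 h0.1 h0.2 w))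
        (Submodule.smul_mem _ _ (hNmem A1 h1.1 h1.2 w))
    rw [decomp u, decomp v, omega0_expand, V0_isotropic (memV u) (memV v)]
    have c0 := cross_identity hk h0.1 h0.2 u v
    have c1 := cross_identity hk h1.1 h1.2 u v
    rw [omega0_add_right, omega0_add_left, omega0_smul_left, omega0_smul_left,
        omega0_smul_right, omega0_smul_right]
    linear_combination t * c0 + (1 - t) * c1
  refine ⟨?_, P2, ?_⟩
  · -- Part 1: characterization
    intro L hL
    constructor
    · intro hfix
      refine ⟨fun j l => if h : (j:ℕ) < n ∧ (l:ℕ) < n then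
          (L (eV n (pIdx n ⟨(l:ℕ), h.2⟩)) - eV n (pIdx n ⟨(l:ℕ), h.2⟩)) j else 0, ?_, ?_, ?_⟩
      · -- symmetry
        have core : ∀ a b : Fin n,
            (L (eV n (pIdx n a)) - eV n (pIdx n a)) (qIdx n b) =
            (L (eV n (pIdx n b)) - eV n (pIdx n b)) (qIdx n a) := by
          intro a b
          have h := cross_identity hk hL hfix (eV n (pIdx n a)) (eV n (pIdx n b))
          rw [omega0_eV_p', omega0_eV_p] at h
          linarith
        intro j l
        beta_reduce
        by_cases h1 : (j:ℕ) < n ∧ (l:ℕ) < n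
        · rw [dif_pos h1, dif_pos ⟨h1.2, h1.1⟩]
          have hcore := core ⟨(l:ℕ), h1.2⟩ ⟨(j:ℕ), h1.1⟩
          rwa [show qIdx n ⟨(j:ℕ), h1.1⟩ = j from Fin.ext rfl,
               show qIdx n ⟨(l:ℕ), h1.2⟩ = l from Fin.ext rfl] at hcore
        · rw [dif_neg h1, dif_neg (by omega)]
      · -- small indices fixed
        intro i hi
        exact hfix _ (eV_mem_Rnk hi)
      · -- large indices
        intro l hl
        have hl2 : (l:ℕ) < 2 * n := l.isLt
        have hpll : pIdx n ⟨(l:ℕ) - n, by omega⟩ = l := Fin.ext (by simp [pIdx]; omega)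
        have hV0 : L (eV n l) - eV n l ∈ V0 n k := hNmem L hL hfix _
        rw [mem_V0_iff] at hV0
        ext i
        rw [add_apply', R2.sum_apply]
        have hsum : (∑ j : Fin (2*n), (if k ≤ (j:ℕ) ∧ (j:ℕ) < n
            then (if h : (j:ℕ) < n ∧ ((⟨(l:ℕ) - n, by omega⟩ : Fin (2*n)):ℕ) < n then
              (L (eV n (pIdx n ⟨_, h.2⟩)) - eV n (pIdx n ⟨_, h.2⟩)) j else 0) • eV n j
            else 0) i)
            = (if k ≤ (i:ℕ) ∧ (i:ℕ) < n then (L (eV n l) - eV n l) i else 0) := by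
          rw [Finset.sum_eq_single i]
          · by_cases hc : k ≤ (i:ℕ) ∧ (i:ℕ) < n
            · rw [if_pos hc, if_pos hc, dif_pos ⟨hc.2, by simp; omega⟩, smul_apply', eV_eq,
                  mul_one]
              rw [hpll]
            · rw [if_neg hc, if_neg hc]; rfl
          · intro j _ hj
            by_cases hc : k ≤ (j:ℕ) ∧ (j:ℕ) < n
            · rw [if_pos hc, smul_apply', eV_ne _ _ (fun h => hj (Fin.ext h.symm)), mul_zero]
            · rw [if_neg hc]; rfl
          · intro h; exact absurd (Finset.mem_univ i) h
        rw [hsum]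
        by_cases hc : k ≤ (i:ℕ) ∧ (i:ℕ) < n
        · rw [if_pos hc, sub_apply']; ring
        · rw [if_neg hc, add_zero]
          have := hV0 i (by omega)
          rw [sub_apply'] at this
          linarith
    · rintro ⟨b, -, hfix1, -⟩ z hz
      rw [mem_Rnk_iff] at hz
      conv_lhs => rw [← eV_decomp z]
      conv_rhs => rw [← eV_decomp z]
      rw [map_sum]
      refine Finset.sum_congr rfl fun i _ => ?_
      rw [L.map_smul]
      by_cases hi : (i:ℕ) < n + k
      · rw [hfix1 i hi]
      · rw [hz i (by omega)]; simp
  · -- Part 3: connectedness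
    have hid : MemSp2nk n k (ContinuousLinearMap.id ℝ (R2 n)) := by
      exact ⟨fun u v => rfl, fun z _ => rfl⟩
    have hconv : Convex ℝ {L : R2 n →L[ℝ] R2 n | MemSp2nk n k L} := by
      intro x hx y hy a c ha hc hac
      have hc' : c = 1 - a := by linarith
      subst hc'
      exact P2 x y hx hy a ⟨ha, by linarith⟩
    exact hconv.isConnected ⟨_, hid⟩

end CEH
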